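/- For every finite simple graph G = (V, E) with nonempty vertex set, δ_loc(G) = |V| − 1 − max over nonempty subsets K ⊆ V of |{ v ∈ V \ K : |N_G(v) ∩ K| ≡ 0 (mod 2) }|. -/

import Mathlib

open SimpleGraph

variable {V : Type*}

/-- Local complementation of `G` at the vertex `v`: adjacency among the
neighbors of `v` is complemented, i.e. the edge set is `E Δ K_v`. -/
def localComp (G : SimpleGraph V) (v : V) : SimpleGraph V where
  Adj u w := u ≠ w ∧ ¬ (G.Adj u w ↔ (G.Adj v u ∧ G.Adj v w))
  symm := by
    constructor
    intro u w h
    refine ⟨h.1.symm, ?_⟩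
    have h1 := G.adj_comm u w
    have h2 := h.2
    tauto
  loopless := by
    constructor
    intro u h
    exact h.1 rfl

/-- The minimal vertex degree `δ(G)` of a graph. -/
noncomputable def minDegree (G : SimpleGraph V) : ℕ :=
  sInf (Set.range fun v => (G.neighborSet v).ncard)

/-- The minimal degree under local complementation `δ_loc(G)`: the minimum of
`δ(G')` over all graphs `G'` obtainable from `G` by a finite sequence of
local complementations. -/
noncomputable def minDegreeLoc (G : SimpleGraph V) : ℕ :=
  sInf {n | ∃ l : List V, minDegree (l.foldl localComp G) = n}

/-- `D` is an evenly seen set if every vertex outside `D` has an even number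
of neighbors in `D`. -/
def EvenlySeen (G : SimpleGraph V) (D : Set V) : Prop :=
  ∀ u ∉ D, Even ((G.neighborSet u ∩ D).ncard)

/-- A nonempty set `K` is `d`-locally evenly seen if there is a set `D` with
`K ⊆ D ⊆ V` and `|D| = d` such that every vertex outside `D` has an even
number of neighbors in `K`. -/
def LocallyEvenlySeen (G : SimpleGraph V) (d : ℕ) (K : Set V) : Prop :=
  K.Nonempty ∧ ∃ D : Set V, K ⊆ D ∧ D.ncard = d ∧
    ∀ u ∉ D, Even ((G.neighborSet u ∩ K).ncard)

/-! Write `Odd(K)` for the set of vertices with an odd number of neighbours in `K` and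
`m(G) = min_{K ≠ ∅} |K ∪ Odd(K)|`; the set in the statement is the complement of `K ∪ Odd(K)`,
so the theorem says `δ_loc(G) = m(G) - 1`.

Local complementation at `v` adds `[v ~ u] · (par_K(v) + [u ∈ K])` to the parity `par_K(u)` of
the number of neighbours of `u` in `K`. Hence `K ∪ Odd(K)` computed after the complementation
contains `K' ∪ Odd(K')` computed before it, for one of `K' = K, K \ {v}, K ∪ {v}`; as local
complementation is an involution, `m` is an invariant. Taking `K = {v}` gives `m ≤ δ + 1`.

Conversely, starting from any `K`: while a vertex of `K` has an odd number of neighbours in `K`,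
complementing at it lets one remove it from `K`. Otherwise pick `u ∈ K`: if `u` has an even
neighbour `w`, complementing at `w` makes `u` odd without enlarging `K ∪ Odd(K)`; if not, all
neighbours of `u` lie in `Odd(K)`, so `deg u < |K ∪ Odd(K)|`. -/

open Finset
open scoped Classical

lemma localComp_localComp (G : SimpleGraph V) (v : V) :
    localComp (localComp G v) v = G := by
  ext u w
  by_cases huw : u = w
  · subst huw; simp [localComp]
  · simp only [localComp, huw, ne_eq, not_false_iff, true_and]
    by_cases h2 : G.Adj u w <;> by_cases h3 : G.Adj v u <;> by_cases h4 : G.Adj v w <;>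
      simp_all [G.ne_of_adj]

lemma ZMod.two_ne_one_iff {x : ZMod 2} : x ≠ 1 ↔ x = 0 := by revert x; decide

noncomputable def nbrParity (G : SimpleGraph V) (K : Finset V) (u : V) : ZMod 2 :=
  ∑ w ∈ K, if G.Adj u w then 1 else 0

lemma nbrParity_localComp (G : SimpleGraph V) (v : V) (K : Finset V) (u : V) :
    nbrParity (localComp G v) K u =
      nbrParity G K u + (if G.Adj v u then 1 else 0) *
        (nbrParity G K v + if u ∈ K then 1 else 0) := by
  have hterm : ∀ w, (if (localComp G v).Adj u w then (1 : ZMod 2) else 0) =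
      (if G.Adj u w then 1 else 0) + (if G.Adj v u then 1 else 0) *
        ((if G.Adj v w then 1 else 0) + if u = w then 1 else 0) := by
    intro w
    by_cases h1 : u = w
    · subst h1
      by_cases h3 : G.Adj v u <;> simp [localComp, h3, CharTwo.add_self_eq_zero]
    · by_cases h2 : G.Adj u w <;> by_cases h3 : G.Adj v u <;> by_cases h4 : G.Adj v w <;>
        simp [localComp, h1, h2, h3, h4, CharTwo.add_self_eq_zero]
  simp only [nbrParity, hterm, sum_add_distrib, ← mul_sum, sum_ite_eq]

lemma nbrParity_singleton (G : SimpleGraph V) (v u : V) :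
    nbrParity G {v} u = if G.Adj u v then 1 else 0 :=
  sum_singleton _ _

lemma nbrParity_insert (G : SimpleGraph V) {K : Finset V} {v : V} (hv : v ∉ K) (u : V) :
    nbrParity G (insert v K) u = nbrParity G K u + if G.Adj u v then 1 else 0 := by
  rw [nbrParity, sum_insert hv, add_comm]
  rfl

lemma nbrParity_erase (G : SimpleGraph V) {K : Finset V} {w : V} (hw : w ∈ K) (u : V) :
    nbrParity G (K.erase w) u = nbrParity G K u + if G.Adj u w then 1 else 0 := by
  have h := nbrParity_insert G (notMem_erase w K) u
  rw [insert_erase hw] at h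
  rw [h, add_assoc, CharTwo.add_self_eq_zero, add_zero]

lemma even_ncard_neighborSet_inter_iff (G : SimpleGraph V) (K : Finset V) (u : V) :
    Even ((G.neighborSet u ∩ K).ncard) ↔ nbrParity G K u = 0 := by
  have hK : G.neighborSet u ∩ K = ↑(K.filter (G.Adj u)) := by
    ext x
    simp [and_comm]
  rw [hK, Set.ncard_coe_finset, nbrParity, sum_boole, ZMod.natCast_eq_zero_iff_even]

lemma erase_nonempty_of_nbrParity_eq_one {G : SimpleGraph V} {K : Finset V} {w : V}
    (hw : w ∈ K) (hp : nbrParity G K w = 1) : (K.erase w).Nonempty := by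
  refine nonempty_iff_ne_empty.2 fun he => ?_
  rw [erase_eq_empty_iff] at he
  rcases he with rfl | rfl
  · exact absurd hw (notMem_empty w)
  · simp [nbrParity_singleton] at hp

lemma nbrParity_localComp_self {G : SimpleGraph V} {K : Finset V} (v : V) :
    nbrParity (localComp G v) K v = nbrParity G K v := by
  rw [nbrParity_localComp, if_neg (G.loopless.irrefl v), zero_mul, add_zero]

section OddClosure

variable [Fintype V]

/-- `K ∪ Odd(K)`. -/
noncomputable def oddClosure (G : SimpleGraph V) (K : Finset V) : Finset V :=
  K ∪ univ.filter (nbrParity G K · = 1)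

variable {G : SimpleGraph V} {K : Finset V}

lemma mem_oddClosure {u : V} : u ∈ oddClosure G K ↔ u ∈ K ∨ nbrParity G K u = 1 := by
  simp [oddClosure]

lemma subset_oddClosure : K ⊆ oddClosure G K := subset_union_left

lemma mem_oddClosure_of_nbrParity {u : V} (h : nbrParity G K u = 1) : u ∈ oddClosure G K :=
  mem_oddClosure.2 (.inr h)

lemma notMem_oddClosure_iff {u : V} :
    u ∉ oddClosure G K ↔ u ∉ K ∧ nbrParity G K u = 0 := by
  rw [mem_oddClosure, not_or, ← ne_eq, ZMod.two_ne_one_iff]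

lemma oddClosure_subset_of_nbrParity {G' : SimpleGraph V} {K' : Finset V}
    (hK : K' ⊆ oddClosure G K)
    (hp : ∀ u ∉ K, nbrParity G' K' u = 1 → nbrParity G K u = 1) :
    oddClosure G' K' ⊆ oddClosure G K := by
  intro u hu
  by_cases huK : u ∈ K
  · exact subset_oddClosure huK
  rcases mem_oddClosure.1 hu with h | h
  · exact hK h
  · exact mem_oddClosure_of_nbrParity (hp u huK h)

lemma oddClosure_localComp_erase_subset {w : V} (hw : w ∈ K) (hp : nbrParity G K w = 1) :
    oddClosure (localComp G w) (K.erase w) ⊆ oddClosure G K := by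
  refine oddClosure_subset_of_nbrParity ((erase_subset w K).trans subset_oddClosure)
    fun u huK h => ?_
  rw [nbrParity_localComp, nbrParity_erase G hw, nbrParity_erase G hw, hp,
    if_neg (G.loopless.irrefl w), add_zero, if_neg fun h => huK (mem_of_mem_erase h),
    add_zero, mul_one, G.adj_comm w u, add_assoc, CharTwo.add_self_eq_zero, add_zero] at h
  exact h

lemma oddClosure_localComp_subset {w : V} (hp : nbrParity G K w = 0) :
    oddClosure (localComp G w) K ⊆ oddClosure G K := by
  refine oddClosure_subset_of_nbrParity subset_oddClosure fun u huK h => ?_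
  rwa [nbrParity_localComp, hp, if_neg huK, add_zero, mul_zero, add_zero] at h

lemma exists_oddClosure_subset_oddClosure_localComp (v : V) (hK : K.Nonempty) :
    ∃ K' : Finset V, K'.Nonempty ∧ oddClosure G K' ⊆ oddClosure (localComp G v) K := by
  have hinv := localComp_localComp G v
  by_cases hp : nbrParity G K v = 1
  · have hp' : nbrParity (localComp G v) K v = 1 := (nbrParity_localComp_self v).trans hp
    by_cases hvK : v ∈ K
    · refine ⟨K.erase v, erase_nonempty_of_nbrParity_eq_one hvK hp', ?_⟩
      simpa only [hinv] using oddClosure_localComp_erase_subset hvK hp'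
    · refine ⟨insert v K, insert_nonempty v K, ?_⟩
      refine oddClosure_subset_of_nbrParity
        (insert_subset (mem_oddClosure_of_nbrParity hp') subset_oddClosure) fun u huK h => ?_
      rw [nbrParity_insert G hvK] at h
      rw [nbrParity_localComp, hp, if_neg huK, add_zero, mul_one, G.adj_comm v u, h]
  · have hp' : nbrParity (localComp G v) K v = 0 :=
      (nbrParity_localComp_self v).trans (ZMod.two_ne_one_iff.1 hp)
    exact ⟨K, hK, by simpa only [hinv] using oddClosure_localComp_subset hp'⟩

lemma card_oddClosure_singleton (G : SimpleGraph V) (v : V) :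
    #(oddClosure G {v}) = (G.neighborSet v).ncard + 1 := by
  have h : oddClosure G {v} = insert v (univ.filter (G.Adj v)) := by
    ext u
    by_cases huv : u = v
    · simp [mem_oddClosure, huv]
    · by_cases hvu : G.Adj v u <;>
        simp [mem_oddClosure, nbrParity_singleton, huv, hvu, G.adj_comm u v]
  have hcoe : G.neighborSet v = ↑(univ.filter (G.Adj v)) := by ext; simp
  rw [h, card_insert_of_notMem (by simp), hcoe, Set.ncard_coe_finset]

end OddClosure

section MinOddClosure

variable [Fintype V]

/-- `m(G) = min_{K ≠ ∅} |K ∪ Odd(K)|`. -/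
noncomputable def minOddClosure (G : SimpleGraph V) : ℕ :=
  sInf {n | ∃ K : Finset V, K.Nonempty ∧ #(oddClosure G K) = n}

lemma minOddClosure_le {G : SimpleGraph V} {K : Finset V} (hK : K.Nonempty) :
    minOddClosure G ≤ #(oddClosure G K) :=
  Nat.sInf_le ⟨K, hK, rfl⟩

variable [Nonempty V]

lemma exists_card_oddClosure_eq_minOddClosure (G : SimpleGraph V) :
    ∃ K : Finset V, K.Nonempty ∧ #(oddClosure G K) = minOddClosure G := by
  obtain ⟨v⟩ := ‹Nonempty V›
  exact Nat.sInf_mem (s := {n | ∃ K : Finset V, K.Nonempty ∧ #(oddClosure G K) = n})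
    ⟨_, {v}, singleton_nonempty v, rfl⟩

lemma minOddClosure_le_localComp (G : SimpleGraph V) (v : V) :
    minOddClosure G ≤ minOddClosure (localComp G v) := by
  obtain ⟨K, hK, hcard⟩ := exists_card_oddClosure_eq_minOddClosure (localComp G v)
  obtain ⟨K', hK', hsub⟩ := exists_oddClosure_subset_oddClosure_localComp v hK
  exact (minOddClosure_le hK').trans (hcard ▸ card_le_card hsub)

lemma minOddClosure_localComp (G : SimpleGraph V) (v : V) :
    minOddClosure (localComp G v) = minOddClosure G := by
  refine le_antisymm ?_ (minOddClosure_le_localComp G v)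
  simpa only [localComp_localComp] using minOddClosure_le_localComp (localComp G v) v

lemma minOddClosure_foldl_localComp (G : SimpleGraph V) (l : List V) :
    minOddClosure (l.foldl localComp G) = minOddClosure G := by
  induction l generalizing G with
  | nil => rfl
  | cons v l ih => rw [List.foldl_cons, ih, minOddClosure_localComp]

lemma minOddClosure_le_minDegree_add_one (G : SimpleGraph V) :
    minOddClosure G ≤ _root_.minDegree G + 1 := by
  obtain ⟨v, hv⟩ : ∃ v, (G.neighborSet v).ncard = _root_.minDegree G :=
    Nat.sInf_mem (Set.range_nonempty _)
  simpa only [card_oddClosure_singleton, hv] using minOddClosure_le (G := G) (singleton_nonempty v)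

lemma one_le_minOddClosure (G : SimpleGraph V) : 1 ≤ minOddClosure G := by
  obtain ⟨K, hK, hcard⟩ := exists_card_oddClosure_eq_minOddClosure G
  exact hcard ▸ hK.card_pos.trans_le (card_le_card subset_oddClosure)

lemma minOddClosure_le_card (G : SimpleGraph V) : minOddClosure G ≤ Fintype.card V :=
  let ⟨v⟩ := ‹Nonempty V›
  (minOddClosure_le (singleton_nonempty v)).trans (card_le_univ _)

end MinOddClosure

lemma minDegree_le_ncard_neighborSet (G : SimpleGraph V) (v : V) :
    _root_.minDegree G ≤ (G.neighborSet v).ncard :=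
  Nat.sInf_le ⟨v, rfl⟩

lemma minDegreeLoc_le_minDegree_foldl (G : SimpleGraph V) (l : List V) :
    minDegreeLoc G ≤ _root_.minDegree (l.foldl localComp G) :=
  Nat.sInf_le ⟨l, rfl⟩

lemma exists_minDegree_foldl_eq_minDegreeLoc (G : SimpleGraph V) :
    ∃ l : List V, _root_.minDegree (l.foldl localComp G) = minDegreeLoc G :=
  Nat.sInf_mem (s := {n | ∃ l : List V, _root_.minDegree (l.foldl localComp G) = n})
    ⟨_, [], rfl⟩

section Reduction

variable [Fintype V]

lemma ncard_neighborSet_lt_card_oddClosure {G : SimpleGraph V} {K : Finset V} {u : V}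
    (hu : u ∈ K) (hN : ∀ w, G.Adj u w → nbrParity G K w = 1) :
    (G.neighborSet u).ncard < #(oddClosure G K) := by
  have hsub : G.neighborSet u ⊆ ↑((oddClosure G K).erase u) := fun w hw =>
    mem_erase.2 ⟨G.ne_of_adj hw |>.symm, mem_oddClosure_of_nbrParity (hN w hw)⟩
  calc (G.neighborSet u).ncard ≤ #((oddClosure G K).erase u) := by
        simpa only [Set.ncard_coe_finset] using Set.ncard_le_ncard hsub
    _ < #(oddClosure G K) := card_erase_lt_of_mem (subset_oddClosure hu)

lemma exists_foldl_localComp_minDegree_lt (G : SimpleGraph V) {K : Finset V}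
    (hK : K.Nonempty) :
    ∃ l : List V, _root_.minDegree (l.foldl localComp G) < #(oddClosure G K) := by
  induction hn : #K using Nat.strong_induction_on generalizing G K with
  | _ n ih =>
  have shrink : ∀ {G' : SimpleGraph V} {w : V}, oddClosure G' K ⊆ oddClosure G K → w ∈ K →
      nbrParity G' K w = 1 →
      ∃ l : List V, _root_.minDegree ((w :: l).foldl localComp G') < #(oddClosure G K) := by
    intro G' w hG' hw hp
    obtain ⟨l, hl⟩ := ih _ (hn ▸ card_erase_lt_of_mem hw) (localComp G' w)
      (erase_nonempty_of_nbrParity_eq_one hw hp) rfl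
    exact ⟨l, hl.trans_le (card_le_card ((oddClosure_localComp_erase_subset hw hp).trans hG'))⟩
  by_cases hodd : ∃ w ∈ K, nbrParity G K w = 1
  · obtain ⟨w, hw, hp⟩ := hodd
    obtain ⟨l, hl⟩ := shrink subset_rfl hw hp
    exact ⟨w :: l, hl⟩
  obtain ⟨u, hu⟩ := hK
  by_cases hN : ∀ w, G.Adj u w → nbrParity G K w = 1
  · exact ⟨[], (minDegree_le_ncard_neighborSet G u).trans_lt
      (ncard_neighborSet_lt_card_oddClosure hu hN)⟩
  obtain ⟨w, huw, hpw⟩ := not_forall₂.1 hN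
  have hpu : nbrParity (localComp G w) K u = 1 := by
    rw [nbrParity_localComp, ZMod.two_ne_one_iff.1 hpw,
      ZMod.two_ne_one_iff.1 fun h => hodd ⟨u, hu, h⟩, if_pos huw.symm, if_pos hu]
    rfl
  obtain ⟨l, hl⟩ := shrink (oddClosure_localComp_subset (ZMod.two_ne_one_iff.1 hpw)) hu hpu
  exact ⟨w :: u :: l, hl⟩

variable [Nonempty V]

lemma minDegreeLoc_eq_minOddClosure_sub_one (G : SimpleGraph V) :
    minDegreeLoc G = minOddClosure G - 1 := by
  apply le_antisymm
  · obtain ⟨K, hK, hcard⟩ := exists_card_oddClosure_eq_minOddClosure G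
    obtain ⟨l, hl⟩ := exists_foldl_localComp_minDegree_lt G hK
    exact (minDegreeLoc_le_minDegree_foldl G l).trans (by omega)
  · obtain ⟨l, hl⟩ := exists_minDegree_foldl_eq_minDegreeLoc G
    have := minOddClosure_le_minDegree_add_one (l.foldl localComp G)
    rw [minOddClosure_foldl_localComp, hl] at this
    omega

end Reduction

section Counting

variable [Fintype V]

lemma ncard_even_outside_eq_card_sub (G : SimpleGraph V) (K : Finset V) :
    {v | v ∉ (K : Set V) ∧ Even ((G.neighborSet v ∩ K).ncard)}.ncard =
      Fintype.card V - #(oddClosure G K) := by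
  have h : {v | v ∉ (K : Set V) ∧ Even ((G.neighborSet v ∩ K).ncard)} =
      ↑(oddClosure G K)ᶜ := by
    ext v
    simp only [Set.mem_ofPred_eq, coe_compl, Set.mem_compl_iff, mem_coe, notMem_oddClosure_iff,
      even_ncard_neighborSet_inter_iff]
  rw [h, Set.ncard_coe_finset, card_compl]

lemma sSup_ncard_even_outside [Nonempty V] (G : SimpleGraph V) :
    sSup {n | ∃ K : Set V, K.Nonempty ∧
        {v | v ∉ K ∧ Even ((G.neighborSet v ∩ K).ncard)}.ncard = n} =
      Fintype.card V - minOddClosure G := by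
  set T := {n | ∃ K : Set V, K.Nonempty ∧
    {v | v ∉ K ∧ Even ((G.neighborSet v ∩ K).ncard)}.ncard = n}
  have hT : ∀ n ∈ T, ∃ K : Finset V, K.Nonempty ∧ n = Fintype.card V - #(oddClosure G K) := by
    rintro n ⟨K, hK, rfl⟩
    refine ⟨K.toFinset, Set.toFinset_nonempty.2 hK, ?_⟩
    rw [← ncard_even_outside_eq_card_sub, Set.coe_toFinset]
  obtain ⟨K₀, hK₀, hcard⟩ := exists_card_oddClosure_eq_minOddClosure G
  have hK₀T : Fintype.card V - minOddClosure G ∈ T :=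
    ⟨K₀, coe_nonempty.2 hK₀, by rw [ncard_even_outside_eq_card_sub, hcard]⟩
  refine le_antisymm (csSup_le ⟨_, hK₀T⟩ fun n hn => ?_) (le_csSup ⟨Fintype.card V, ?_⟩ hK₀T)
  · obtain ⟨K, hK, rfl⟩ := hT n hn
    exact Nat.sub_le_sub_left (minOddClosure_le hK) _
  · rintro n hn
    obtain ⟨K, -, rfl⟩ := hT n hn
    exact Nat.sub_le _ _

end Counting

/-- `δ_loc(G) = |V| - 1 - max_{∅ ≠ K ⊆ V} |{v ∈ V \ K :
|N_G(v) ∩ K| is even}|`. -/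
theorem statement_7 [Fintype V] [Nonempty V] (G : SimpleGraph V) :
    minDegreeLoc G = Fintype.card V - 1 -
      sSup {n | ∃ K : Set V, K.Nonempty ∧
        {v | v ∉ K ∧ Even ((G.neighborSet v ∩ K).ncard)}.ncard = n} := by
  rw [sSup_ncard_even_outside, minDegreeLoc_eq_minOddClosure_sub_one]
  have := one_le_minOddClosure G
  have := minOddClosure_le_card G
  omega
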